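/- The tableau system TC_SCI is complete: if an SCI-formula φ is SCI-valid, then φ has a tableau proof, i.e., there exists a closed TC_SCI-tableau with w⁻ : φ (w⁻ ∈ L⁻) at its root; equivalently, every fully expanded TC_SCI-tableau with w⁻ : φ at its root is closed. -/

import Mathlib

/-- SCI-formulas: atoms, negation, implication, and the identity connective. -/
inductive SCIForm : Type
  | atom : ℕ → SCIForm
  | not : SCIForm → SCIForm
  | imp : SCIForm → SCIForm → SCIForm
  | idn : SCIForm → SCIForm → SCIForm
  deriving DecidableEq

/-- An SCI-structure over a carrier type `U`: a set of designated values and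
operations interpreting ¬, →, ≡. -/
structure SCIStruct (U : Type) where
  D : Set U
  neg : U → U
  imp : U → U → U
  idn : U → U → U

/-- `M` is an SCI-model: `U` is non-empty, `D` is a proper subset of `U`, and the
three semantic conditions hold. -/
def IsSCIModel {U : Type} (M : SCIStruct U) : Prop :=
  Nonempty U ∧ M.D ≠ Set.univ ∧
  (∀ a : U, M.neg a ∈ M.D ↔ a ∉ M.D) ∧
  (∀ a b : U, M.imp a b ∈ M.D ↔ (a ∉ M.D ∨ b ∈ M.D)) ∧
  (∀ a b : U, M.idn a b ∈ M.D ↔ a = b)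

/-- A valuation in an SCI-structure: a homomorphism from formulas to `U`. -/
def IsValuation {U : Type} (M : SCIStruct U) (V : SCIForm → U) : Prop :=
  (∀ φ, V (SCIForm.not φ) = M.neg (V φ)) ∧
  (∀ φ ψ, V (SCIForm.imp φ ψ) = M.imp (V φ) (V ψ)) ∧
  (∀ φ ψ, V (SCIForm.idn φ ψ) = M.idn (V φ) (V ψ))

/-- A formula is SCI-satisfiable if its denotation is designated in some
SCI-model under some valuation. -/
def SCISatisfiable (φ : SCIForm) : Prop :=
  ∃ (U : Type) (M : SCIStruct U) (V : SCIForm → U),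
    IsSCIModel M ∧ IsValuation M V ∧ V φ ∈ M.D

/-- A formula is SCI-valid if its denotation is designated in every SCI-model
under every valuation. -/
def SCIValid (φ : SCIForm) : Prop :=
  ∀ (U : Type) (M : SCIStruct U) (V : SCIForm → U),
    IsSCIModel M → IsValuation M V → V φ ∈ M.D

/-- Labels: a Boolean polarity (`true` = the set L⁺, `false` = the set L⁻)
together with a natural number index; L⁺ and L⁻ are disjoint and countably
infinite. -/
abbrev Label : Type := Bool × ℕ

/-- `w` belongs to L⁺. -/
def posL (w : Label) : Prop := w.1 = true

/-- `w` belongs to L⁻. -/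
def negL (w : Label) : Prop := w.1 = false

/-- Expressions occurring on tableau branches: labelled formulas `w : φ`,
equalities `w = v`, inequalities `w ≠ v`, and the closure symbol ⊥. -/
inductive Node : Type
  | lf : Label → SCIForm → Node
  | eq : Label → Label → Node
  | neq : Label → Label → Node
  | bot : Node
  deriving DecidableEq

/-- `|φ|`: the number of occurrences of subformulas of `φ`. -/
def SCIForm.size : SCIForm → ℕ
  | SCIForm.atom _ => 1
  | SCIForm.not φ => SCIForm.size φ + 1
  | SCIForm.imp φ ψ => SCIForm.size φ + SCIForm.size ψ + 1
  | SCIForm.idn φ ψ => SCIForm.size φ + SCIForm.size ψ + 1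

/-- A label is fresh on a branch: no labelled formula on the branch carries it. -/
def freshL (v : Label) (l : List Node) : Prop := ∀ φ, Node.lf v φ ∉ l

/-- One application of a TC_SCI rule extending a single branch.  A branch is a
list of nodes (in order of introduction, root first) together with the set `E`
of labelled formulas to which a decomposition rule has already been applied
(each decomposition rule may be applied only once to a given labelled formula,
each equality rule only if its conclusion is not yet on the branch, and no rule
is applied to a closed branch). -/
inductive Extend : List Node → Set (Label × SCIForm) → List Node → Set (Label × SCIForm) → Prop
  | negP (l : List Node) (E : Set (Label × SCIForm)) (w v : Label) (φ : SCIForm) :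
      Node.bot ∉ l → posL w → Node.lf w (SCIForm.not φ) ∈ l → (w, SCIForm.not φ) ∉ E →
      negL v → freshL v l →
      Extend l E (l ++ [Node.lf v φ]) (insert (w, SCIForm.not φ) E)
  | negN (l : List Node) (E : Set (Label × SCIForm)) (w v : Label) (φ : SCIForm) :
      Node.bot ∉ l → negL w → Node.lf w (SCIForm.not φ) ∈ l → (w, SCIForm.not φ) ∉ E →
      posL v → freshL v l →
      Extend l E (l ++ [Node.lf v φ]) (insert (w, SCIForm.not φ) E)
  | impP1 (l : List Node) (E : Set (Label × SCIForm)) (w v u : Label) (φ ψ : SCIForm) :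
      Node.bot ∉ l → posL w → Node.lf w (SCIForm.imp φ ψ) ∈ l → (w, SCIForm.imp φ ψ) ∉ E →
      negL v → negL u → v ≠ u → freshL v l → freshL u l →
      Extend l E (l ++ [Node.lf v φ, Node.lf u ψ]) (insert (w, SCIForm.imp φ ψ) E)
  | impP2 (l : List Node) (E : Set (Label × SCIForm)) (w v u : Label) (φ ψ : SCIForm) :
      Node.bot ∉ l → posL w → Node.lf w (SCIForm.imp φ ψ) ∈ l → (w, SCIForm.imp φ ψ) ∉ E →
      negL v → posL u → v ≠ u → freshL v l → freshL u l →
      Extend l E (l ++ [Node.lf v φ, Node.lf u ψ]) (insert (w, SCIForm.imp φ ψ) E)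
  | impP3 (l : List Node) (E : Set (Label × SCIForm)) (w v u : Label) (φ ψ : SCIForm) :
      Node.bot ∉ l → posL w → Node.lf w (SCIForm.imp φ ψ) ∈ l → (w, SCIForm.imp φ ψ) ∉ E →
      posL v → posL u → v ≠ u → freshL v l → freshL u l →
      Extend l E (l ++ [Node.lf v φ, Node.lf u ψ]) (insert (w, SCIForm.imp φ ψ) E)
  | impN (l : List Node) (E : Set (Label × SCIForm)) (w v u : Label) (φ ψ : SCIForm) :
      Node.bot ∉ l → negL w → Node.lf w (SCIForm.imp φ ψ) ∈ l → (w, SCIForm.imp φ ψ) ∉ E →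
      posL v → negL u → v ≠ u → freshL v l → freshL u l →
      Extend l E (l ++ [Node.lf v φ, Node.lf u ψ]) (insert (w, SCIForm.imp φ ψ) E)
  | idnP1 (l : List Node) (E : Set (Label × SCIForm)) (w v u : Label) (φ ψ : SCIForm) :
      Node.bot ∉ l → posL w → Node.lf w (SCIForm.idn φ ψ) ∈ l → (w, SCIForm.idn φ ψ) ∉ E →
      posL v → posL u → v ≠ u → freshL v l → freshL u l →
      Extend l E (l ++ [Node.lf v φ, Node.lf u ψ, Node.eq v u]) (insert (w, SCIForm.idn φ ψ) E)
  | idnP2 (l : List Node) (E : Set (Label × SCIForm)) (w v u : Label) (φ ψ : SCIForm) :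
      Node.bot ∉ l → posL w → Node.lf w (SCIForm.idn φ ψ) ∈ l → (w, SCIForm.idn φ ψ) ∉ E →
      negL v → negL u → v ≠ u → freshL v l → freshL u l →
      Extend l E (l ++ [Node.lf v φ, Node.lf u ψ, Node.eq v u]) (insert (w, SCIForm.idn φ ψ) E)
  | idnN1 (l : List Node) (E : Set (Label × SCIForm)) (w v u : Label) (φ ψ : SCIForm) :
      Node.bot ∉ l → negL w → Node.lf w (SCIForm.idn φ ψ) ∈ l → (w, SCIForm.idn φ ψ) ∉ E →
      posL v → posL u → v ≠ u → freshL v l → freshL u l →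
      Extend l E (l ++ [Node.lf v φ, Node.lf u ψ, Node.neq v u]) (insert (w, SCIForm.idn φ ψ) E)
  | idnN2 (l : List Node) (E : Set (Label × SCIForm)) (w v u : Label) (φ ψ : SCIForm) :
      Node.bot ∉ l → negL w → Node.lf w (SCIForm.idn φ ψ) ∈ l → (w, SCIForm.idn φ ψ) ∉ E →
      posL v → negL u → v ≠ u → freshL v l → freshL u l →
      Extend l E (l ++ [Node.lf v φ, Node.lf u ψ]) (insert (w, SCIForm.idn φ ψ) E)
  | idnN3 (l : List Node) (E : Set (Label × SCIForm)) (w v u : Label) (φ ψ : SCIForm) :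
      Node.bot ∉ l → negL w → Node.lf w (SCIForm.idn φ ψ) ∈ l → (w, SCIForm.idn φ ψ) ∉ E →
      negL v → posL u → v ≠ u → freshL v l → freshL u l →
      Extend l E (l ++ [Node.lf v φ, Node.lf u ψ]) (insert (w, SCIForm.idn φ ψ) E)
  | idnN4 (l : List Node) (E : Set (Label × SCIForm)) (w v u : Label) (φ ψ : SCIForm) :
      Node.bot ∉ l → negL w → Node.lf w (SCIForm.idn φ ψ) ∈ l → (w, SCIForm.idn φ ψ) ∉ E →
      negL v → negL u → v ≠ u → freshL v l → freshL u l →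
      Extend l E (l ++ [Node.lf v φ, Node.lf u ψ, Node.neq v u]) (insert (w, SCIForm.idn φ ψ) E)
  | eqNeg (l : List Node) (E : Set (Label × SCIForm)) (w v u y : Label) (φ ψ : SCIForm) :
      Node.bot ∉ l → Node.lf w φ ∈ l → Node.lf v ψ ∈ l → Node.eq w v ∈ l →
      Node.lf u (SCIForm.not φ) ∈ l → Node.lf y (SCIForm.not ψ) ∈ l →
      Node.eq u y ∉ l →
      Extend l E (l ++ [Node.eq u y]) E
  | eqImp (l : List Node) (E : Set (Label × SCIForm)) (w v w' v' x z : Label) (φ ψ χ θ : SCIForm) :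
      Node.bot ∉ l → Node.lf w φ ∈ l → Node.lf v ψ ∈ l → Node.eq w v ∈ l →
      Node.lf w' χ ∈ l → Node.lf v' θ ∈ l → Node.eq w' v' ∈ l →
      Node.lf x (SCIForm.imp φ χ) ∈ l → Node.lf z (SCIForm.imp ψ θ) ∈ l →
      Node.eq x z ∉ l →
      Extend l E (l ++ [Node.eq x z]) E
  | eqIdn (l : List Node) (E : Set (Label × SCIForm)) (w v w' v' x z : Label) (φ ψ χ θ : SCIForm) :
      Node.bot ∉ l → Node.lf w φ ∈ l → Node.lf v ψ ∈ l → Node.eq w v ∈ l →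
      Node.lf w' χ ∈ l → Node.lf v' θ ∈ l → Node.eq w' v' ∈ l →
      Node.lf x (SCIForm.idn φ χ) ∈ l → Node.lf z (SCIForm.idn ψ θ) ∈ l →
      Node.eq x z ∉ l →
      Extend l E (l ++ [Node.eq x z]) E
  | ruleF (l : List Node) (E : Set (Label × SCIForm)) (w v : Label) (φ : SCIForm) :
      Node.bot ∉ l → Node.lf w φ ∈ l → Node.lf v φ ∈ l → Node.eq w v ∉ l →
      Extend l E (l ++ [Node.eq w v]) E
  | ruleSym (l : List Node) (E : Set (Label × SCIForm)) (w v : Label) :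
      Node.bot ∉ l → Node.eq w v ∈ l → Node.eq v w ∉ l →
      Extend l E (l ++ [Node.eq v w]) E
  | ruleTran (l : List Node) (E : Set (Label × SCIForm)) (w v u : Label) :
      Node.bot ∉ l → Node.eq w v ∈ l → Node.eq v u ∈ l → Node.eq w u ∉ l →
      Extend l E (l ++ [Node.eq w u]) E
  | bot1 (l : List Node) (E : Set (Label × SCIForm)) (w v : Label) :
      Node.bot ∉ l → Node.eq w v ∈ l → Node.neq w v ∈ l →
      Extend l E (l ++ [Node.bot]) E
  | bot2 (l : List Node) (E : Set (Label × SCIForm)) (w v : Label) :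
      Node.bot ∉ l → posL w → negL v → Node.eq w v ∈ l →
      Extend l E (l ++ [Node.bot]) E

/-- `ClosedTab l E` holds iff there is a closed TC_SCI-tableau all of whose
branches extend the branch `l` (with `E` the set of labelled formulas already
decomposed on `l`): either a closure rule applies to `l`, or some rule of
TC_SCI can be applied so that all resulting branches carry closed tableaux. -/
inductive ClosedTab : List Node → Set (Label × SCIForm) → Prop
  | clos1 (l : List Node) (E : Set (Label × SCIForm)) (w v : Label) :
      Node.eq w v ∈ l → Node.neq w v ∈ l → ClosedTab l E
  | clos2 (l : List Node) (E : Set (Label × SCIForm)) (w v : Label) :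
      posL w → negL v → Node.eq w v ∈ l → ClosedTab l E
  | negP (l : List Node) (E : Set (Label × SCIForm)) (w v : Label) (φ : SCIForm) :
      posL w → Node.lf w (SCIForm.not φ) ∈ l → (w, SCIForm.not φ) ∉ E →
      negL v → freshL v l →
      ClosedTab (l ++ [Node.lf v φ]) (insert (w, SCIForm.not φ) E) →
      ClosedTab l E
  | negN (l : List Node) (E : Set (Label × SCIForm)) (w v : Label) (φ : SCIForm) :
      negL w → Node.lf w (SCIForm.not φ) ∈ l → (w, SCIForm.not φ) ∉ E →
      posL v → freshL v l →
      ClosedTab (l ++ [Node.lf v φ]) (insert (w, SCIForm.not φ) E) →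
      ClosedTab l E
  | impP (l : List Node) (E : Set (Label × SCIForm)) (w : Label) (φ ψ : SCIForm)
      (v1 u1 v2 u2 v3 u3 : Label) :
      posL w → Node.lf w (SCIForm.imp φ ψ) ∈ l → (w, SCIForm.imp φ ψ) ∉ E →
      negL v1 → negL u1 → v1 ≠ u1 → freshL v1 l → freshL u1 l →
      negL v2 → posL u2 → v2 ≠ u2 → freshL v2 l → freshL u2 l →
      posL v3 → posL u3 → v3 ≠ u3 → freshL v3 l → freshL u3 l →
      ClosedTab (l ++ [Node.lf v1 φ, Node.lf u1 ψ]) (insert (w, SCIForm.imp φ ψ) E) →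
      ClosedTab (l ++ [Node.lf v2 φ, Node.lf u2 ψ]) (insert (w, SCIForm.imp φ ψ) E) →
      ClosedTab (l ++ [Node.lf v3 φ, Node.lf u3 ψ]) (insert (w, SCIForm.imp φ ψ) E) →
      ClosedTab l E
  | impN (l : List Node) (E : Set (Label × SCIForm)) (w v u : Label) (φ ψ : SCIForm) :
      negL w → Node.lf w (SCIForm.imp φ ψ) ∈ l → (w, SCIForm.imp φ ψ) ∉ E →
      posL v → negL u → v ≠ u → freshL v l → freshL u l →
      ClosedTab (l ++ [Node.lf v φ, Node.lf u ψ]) (insert (w, SCIForm.imp φ ψ) E) →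
      ClosedTab l E
  | idnP (l : List Node) (E : Set (Label × SCIForm)) (w : Label) (φ ψ : SCIForm)
      (v1 u1 v2 u2 : Label) :
      posL w → Node.lf w (SCIForm.idn φ ψ) ∈ l → (w, SCIForm.idn φ ψ) ∉ E →
      posL v1 → posL u1 → v1 ≠ u1 → freshL v1 l → freshL u1 l →
      negL v2 → negL u2 → v2 ≠ u2 → freshL v2 l → freshL u2 l →
      ClosedTab (l ++ [Node.lf v1 φ, Node.lf u1 ψ, Node.eq v1 u1]) (insert (w, SCIForm.idn φ ψ) E) →
      ClosedTab (l ++ [Node.lf v2 φ, Node.lf u2 ψ, Node.eq v2 u2]) (insert (w, SCIForm.idn φ ψ) E) →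
      ClosedTab l E
  | idnN (l : List Node) (E : Set (Label × SCIForm)) (w : Label) (φ ψ : SCIForm)
      (v1 u1 v2 u2 v3 u3 v4 u4 : Label) :
      negL w → Node.lf w (SCIForm.idn φ ψ) ∈ l → (w, SCIForm.idn φ ψ) ∉ E →
      posL v1 → posL u1 → v1 ≠ u1 → freshL v1 l → freshL u1 l →
      posL v2 → negL u2 → v2 ≠ u2 → freshL v2 l → freshL u2 l →
      negL v3 → posL u3 → v3 ≠ u3 → freshL v3 l → freshL u3 l →
      negL v4 → negL u4 → v4 ≠ u4 → freshL v4 l → freshL u4 l →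
      ClosedTab (l ++ [Node.lf v1 φ, Node.lf u1 ψ, Node.neq v1 u1]) (insert (w, SCIForm.idn φ ψ) E) →
      ClosedTab (l ++ [Node.lf v2 φ, Node.lf u2 ψ]) (insert (w, SCIForm.idn φ ψ) E) →
      ClosedTab (l ++ [Node.lf v3 φ, Node.lf u3 ψ]) (insert (w, SCIForm.idn φ ψ) E) →
      ClosedTab (l ++ [Node.lf v4 φ, Node.lf u4 ψ, Node.neq v4 u4]) (insert (w, SCIForm.idn φ ψ) E) →
      ClosedTab l E
  | eqNeg (l : List Node) (E : Set (Label × SCIForm)) (w v u y : Label) (φ ψ : SCIForm) :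
      Node.lf w φ ∈ l → Node.lf v ψ ∈ l → Node.eq w v ∈ l →
      Node.lf u (SCIForm.not φ) ∈ l → Node.lf y (SCIForm.not ψ) ∈ l →
      Node.eq u y ∉ l →
      ClosedTab (l ++ [Node.eq u y]) E → ClosedTab l E
  | eqImp (l : List Node) (E : Set (Label × SCIForm)) (w v w' v' x z : Label) (φ ψ χ θ : SCIForm) :
      Node.lf w φ ∈ l → Node.lf v ψ ∈ l → Node.eq w v ∈ l →
      Node.lf w' χ ∈ l → Node.lf v' θ ∈ l → Node.eq w' v' ∈ l →
      Node.lf x (SCIForm.imp φ χ) ∈ l → Node.lf z (SCIForm.imp ψ θ) ∈ l →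
      Node.eq x z ∉ l →
      ClosedTab (l ++ [Node.eq x z]) E → ClosedTab l E
  | eqIdn (l : List Node) (E : Set (Label × SCIForm)) (w v w' v' x z : Label) (φ ψ χ θ : SCIForm) :
      Node.lf w φ ∈ l → Node.lf v ψ ∈ l → Node.eq w v ∈ l →
      Node.lf w' χ ∈ l → Node.lf v' θ ∈ l → Node.eq w' v' ∈ l →
      Node.lf x (SCIForm.idn φ χ) ∈ l → Node.lf z (SCIForm.idn ψ θ) ∈ l →
      Node.eq x z ∉ l →
      ClosedTab (l ++ [Node.eq x z]) E → ClosedTab l E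
  | ruleF (l : List Node) (E : Set (Label × SCIForm)) (w v : Label) (φ : SCIForm) :
      Node.lf w φ ∈ l → Node.lf v φ ∈ l → Node.eq w v ∉ l →
      ClosedTab (l ++ [Node.eq w v]) E → ClosedTab l E
  | ruleSym (l : List Node) (E : Set (Label × SCIForm)) (w v : Label) :
      Node.eq w v ∈ l → Node.eq v w ∉ l →
      ClosedTab (l ++ [Node.eq v w]) E → ClosedTab l E
  | ruleTran (l : List Node) (E : Set (Label × SCIForm)) (w v u : Label) :
      Node.eq w v ∈ l → Node.eq v u ∈ l → Node.eq w u ∉ l →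
      ClosedTab (l ++ [Node.eq w u]) E → ClosedTab l E

/-!
An open branch to which no rule applies is a Hintikka set: its equalities form an equivalence
relation on the labels of its formulas that is compatible with the connectives, and the conclusion
of some decomposition rule for every compound labelled formula lies on the branch. Interpreting
each formula on the branch by the class of its label (designated iff the class contains a label
from L⁺) and every other formula by a truth value gives an SCI-model in which the root `w⁻ : φ` is
not designated. This settles fully expanded tableaux. For the existence of a closed tableau, a
branch that cannot be closed has a one-step extension that cannot be closed either, and repeating
this terminates: decompositions decrease `∑ 3 ^ |ψ|` over the undecomposed formulas, and the
equality rules, which add no formulas, decrease the number of missing equalities between labels.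
-/
open Classical Relation

/-- `l` contains the conclusion of some decomposition rule for `w : φ`. -/
def HasWitness (l : List Node) (w : Label) : SCIForm → Prop
  | .atom _ => True
  | .not φ => ∃ v, Node.lf v φ ∈ l ∧ v.1 = !w.1
  | .imp φ ψ => ∃ v u, Node.lf v φ ∈ l ∧ Node.lf u ψ ∈ l ∧ w.1 = (!v.1 || u.1)
  | .idn φ ψ => ∃ v u, Node.lf v φ ∈ l ∧ Node.lf u ψ ∈ l ∧
      (w.1 = true → Node.eq v u ∈ l) ∧ (w.1 = false → v.1 ≠ u.1 ∨ Node.neq v u ∈ l)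

theorem HasWitness.mono {l l' : List Node} (hl : l ⊆ l') {w : Label} :
    ∀ {φ : SCIForm}, HasWitness l w φ → HasWitness l' w φ
  | .atom _, _ => trivial
  | .not _, ⟨v, hv, hp⟩ => ⟨v, hl hv, hp⟩
  | .imp _ _, ⟨v, u, hv, hu, hp⟩ => ⟨v, u, hl hv, hl hu, hp⟩
  | .idn _ _, ⟨v, u, hv, hu, hpos, hneg⟩ =>
      ⟨v, u, hl hv, hl hu, fun h => hl (hpos h), fun h => (hneg h).imp_right (@hl _)⟩

def EqCongr (l : List Node) (c : SCIForm → SCIForm → SCIForm) : Prop :=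
  ∀ ⦃w v w' v' x z : Label⦄ ⦃φ ψ χ θ : SCIForm⦄,
    Node.lf w φ ∈ l → Node.lf v ψ ∈ l → Node.eq w v ∈ l →
    Node.lf w' χ ∈ l → Node.lf v' θ ∈ l → Node.eq w' v' ∈ l →
    Node.lf x (c φ χ) ∈ l → Node.lf z (c ψ θ) ∈ l → Node.eq x z ∈ l

structure IsHintikka (l : List Node) : Prop where
  not_eq_and_neq : ∀ ⦃w v : Label⦄, Node.eq w v ∈ l → Node.neq w v ∉ l
  not_eq_pos_neg : ∀ ⦃w v : Label⦄, posL w → negL v → Node.eq w v ∉ l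
  eq_symm : ∀ ⦃w v : Label⦄, Node.eq w v ∈ l → Node.eq v w ∈ l
  eq_trans : ∀ ⦃w v u : Label⦄, Node.eq w v ∈ l → Node.eq v u ∈ l → Node.eq w u ∈ l
  eq_of_lf : ∀ ⦃w v : Label⦄ ⦃φ : SCIForm⦄, Node.lf w φ ∈ l → Node.lf v φ ∈ l → Node.eq w v ∈ l
  eq_not : ∀ ⦃w v u y : Label⦄ ⦃φ ψ : SCIForm⦄,
    Node.lf w φ ∈ l → Node.lf v ψ ∈ l → Node.eq w v ∈ l →
    Node.lf u (.not φ) ∈ l → Node.lf y (.not ψ) ∈ l → Node.eq u y ∈ l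
  eq_imp : EqCongr l .imp
  eq_idn : EqCongr l .idn
  hasWitness : ∀ ⦃w : Label⦄ ⦃φ : SCIForm⦄, Node.lf w φ ∈ l → HasWitness l w φ

def eqClass (l : List Node) (w : Label) : Set Label := {v | Node.eq w v ∈ l}

/-- Values of formulas occurring on the branch are classes of labels; all other formulas are
evaluated by plain truth values. -/
abbrev Carrier : Type := Set Label ⊕ Bool

def designated : Set Carrier := {x | x.elim (fun c => ∃ w ∈ c, posL w) (· = true)}

@[simp] theorem inl_mem_designated {c : Set Label} :
    (.inl c : Carrier) ∈ designated ↔ ∃ w ∈ c, posL w := Iff.rfl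

@[simp] theorem inr_mem_designated {b : Bool} : (.inr b : Carrier) ∈ designated ↔ b = true :=
  Iff.rfl

def NegWitness (l : List Node) (x : Carrier) (v : Label) : Prop :=
  ∃ w φ, x = .inl (eqClass l w) ∧ Node.lf w φ ∈ l ∧ Node.lf v (.not φ) ∈ l

def BinWitness (l : List Node) (c : SCIForm → SCIForm → SCIForm) (x y : Carrier) (z : Label) :
    Prop :=
  ∃ a b φ ψ, x = .inl (eqClass l a) ∧ y = .inl (eqClass l b) ∧
    Node.lf a φ ∈ l ∧ Node.lf b ψ ∈ l ∧ Node.lf z (c φ ψ) ∈ l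

/-- On classes carrying a labelled negation, `canonNeg` returns the class of that negation (the rule
(≡¬) makes the choice irrelevant); elsewhere it returns the truth value the SCI condition demands.
`canonBin` does the same for the binary connectives. -/
noncomputable def canonNeg (l : List Node) (x : Carrier) : Carrier :=
  if h : ∃ v, NegWitness l x v then .inl (eqClass l h.choose) else .inr (decide (x ∉ designated))

noncomputable def canonBin (l : List Node) (c : SCIForm → SCIForm → SCIForm)
    (dflt : Carrier → Carrier → Prop) (x y : Carrier) : Carrier :=
  if h : ∃ z, BinWitness l c x y z then .inl (eqClass l h.choose) else .inr (decide (dflt x y))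

noncomputable def canonImp (l : List Node) : Carrier → Carrier → Carrier :=
  canonBin l .imp fun x y => x ∉ designated ∨ y ∈ designated

noncomputable def canonIdn (l : List Node) : Carrier → Carrier → Carrier :=
  canonBin l .idn (· = ·)

noncomputable def canonModel (l : List Node) : SCIStruct Carrier :=
  ⟨designated, canonNeg l, canonImp l, canonIdn l⟩

noncomputable def canonVal (l : List Node) : SCIForm → Carrier
  | .atom n =>
    if h : ∃ w, Node.lf w (.atom n) ∈ l then .inl (eqClass l h.choose) else .inr false
  | .not φ => canonNeg l (canonVal l φ)
  | .imp φ ψ => canonImp l (canonVal l φ) (canonVal l ψ)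
  | .idn φ ψ => canonIdn l (canonVal l φ) (canonVal l ψ)

theorem isValuation_canonVal (l : List Node) : IsValuation (canonModel l) (canonVal l) :=
  ⟨fun _ => rfl, fun _ _ => rfl, fun _ _ => rfl⟩

theorem canonNeg_cases (l : List Node) (x : Carrier) :
    (∃ v, NegWitness l x v ∧ canonNeg l x = .inl (eqClass l v)) ∨
      canonNeg l x = .inr (decide (x ∉ designated)) := by
  unfold canonNeg
  split_ifs with h
  · exact .inl ⟨_, h.choose_spec, rfl⟩
  · exact .inr rfl

theorem canonBin_cases (l : List Node) (c : SCIForm → SCIForm → SCIForm)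
    (dflt : Carrier → Carrier → Prop) (x y : Carrier) :
    (∃ z, BinWitness l c x y z ∧ canonBin l c dflt x y = .inl (eqClass l z)) ∨
      canonBin l c dflt x y = .inr (decide (dflt x y)) := by
  unfold canonBin
  split_ifs with h
  · exact .inl ⟨_, h.choose_spec, rfl⟩
  · exact .inr rfl

namespace IsHintikka

variable {l : List Node} (H : IsHintikka l)
include H

theorem polarity_eq {a b : Label} (h : Node.eq a b ∈ l) : a.1 = b.1 := by
  cases ha : a.1 <;> cases hb : b.1
  · rfl
  · exact absurd (H.eq_symm h) (H.not_eq_pos_neg hb ha)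
  · exact absurd h (H.not_eq_pos_neg ha hb)
  · rfl

theorem eqClass_eq {a b : Label} (h : Node.eq a b ∈ l) : eqClass l a = eqClass l b :=
  Set.ext fun _ => ⟨H.eq_trans (H.eq_symm h), H.eq_trans h⟩

theorem eq_of_eqClass_eq {a b : Label} {ψ : SCIForm} (hb : Node.lf b ψ ∈ l)
    (h : eqClass l a = eqClass l b) : Node.eq a b ∈ l :=
  show b ∈ eqClass l a from h ▸ H.eq_of_lf hb hb

theorem inl_eqClass_mem_designated {w : Label} {φ : SCIForm} (h : Node.lf w φ ∈ l) :
    (.inl (eqClass l w) : Carrier) ∈ designated ↔ w.1 = true :=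
  ⟨fun ⟨_, hv, hpos⟩ => (H.polarity_eq hv).trans hpos, fun hpos => ⟨w, H.eq_of_lf h h, hpos⟩⟩

theorem canonNeg_eqClass {w v : Label} {φ : SCIForm} (hw : Node.lf w φ ∈ l)
    (hv : Node.lf v (.not φ) ∈ l) : canonNeg l (.inl (eqClass l w)) = .inl (eqClass l v) := by
  have hex : ∃ v', NegWitness l (.inl (eqClass l w)) v' := ⟨v, w, φ, rfl, hw, hv⟩
  obtain ⟨w', φ', hcls, hw', hv'⟩ := hex.choose_spec
  have hww' : Node.eq w' w ∈ l := H.eq_of_eqClass_eq hw (Sum.inl.inj hcls).symm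
  rw [canonNeg, dif_pos hex, H.eqClass_eq (H.eq_not hw' hw hww' hv' hv)]

theorem canonBin_eqClass {c : SCIForm → SCIForm → SCIForm} (hc : EqCongr l c)
    (dflt : Carrier → Carrier → Prop) {a b z : Label} {φ ψ : SCIForm} (ha : Node.lf a φ ∈ l)
    (hb : Node.lf b ψ ∈ l) (hz : Node.lf z (c φ ψ) ∈ l) :
    canonBin l c dflt (.inl (eqClass l a)) (.inl (eqClass l b)) = .inl (eqClass l z) := by
  have hex : ∃ z', BinWitness l c (.inl (eqClass l a)) (.inl (eqClass l b)) z' :=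
    ⟨z, a, b, φ, ψ, rfl, rfl, ha, hb, hz⟩
  obtain ⟨a', b', φ', ψ', hca, hcb, ha', hb', hz'⟩ := hex.choose_spec
  have haa' : Node.eq a' a ∈ l := H.eq_of_eqClass_eq ha (Sum.inl.inj hca).symm
  have hbb' : Node.eq b' b ∈ l := H.eq_of_eqClass_eq hb (Sum.inl.inj hcb).symm
  rw [canonBin, dif_pos hex, H.eqClass_eq (hc ha' ha haa' hb' hb hbb' hz' hz)]

theorem canonNeg_mem_designated (x : Carrier) :
    canonNeg l x ∈ designated ↔ x ∉ designated := by
  obtain ⟨v, ⟨w, φ, rfl, hw, hv⟩, heq⟩ | heq := canonNeg_cases l x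
  · obtain ⟨u, hu, hpol⟩ := H.hasWitness hv
    rw [heq, H.inl_eqClass_mem_designated hv, H.inl_eqClass_mem_designated hw,
      ← H.polarity_eq (H.eq_of_lf hu hw), hpol]
    cases v.1 <;> simp
  · simp [heq]

theorem canonImp_mem_designated (x y : Carrier) :
    canonImp l x y ∈ designated ↔ x ∉ designated ∨ y ∈ designated := by
  obtain ⟨z, ⟨a, b, φ, ψ, rfl, rfl, ha, hb, hz⟩, heq⟩ | heq :=
    canonBin_cases l .imp (fun x y => x ∉ designated ∨ y ∈ designated) x y
  · obtain ⟨v, u, hv, hu, hpol⟩ := H.hasWitness hz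
    rw [canonImp, heq, H.inl_eqClass_mem_designated hz, H.inl_eqClass_mem_designated ha,
      H.inl_eqClass_mem_designated hb, ← H.polarity_eq (H.eq_of_lf hv ha),
      ← H.polarity_eq (H.eq_of_lf hu hb), hpol]
    cases v.1 <;> cases u.1 <;> simp
  · simp [canonImp, heq]

theorem canonIdn_mem_designated (x y : Carrier) :
    canonIdn l x y ∈ designated ↔ x = y := by
  obtain ⟨z, ⟨a, b, φ, ψ, rfl, rfl, ha, hb, hz⟩, heq⟩ | heq := canonBin_cases l .idn (· = ·) x y
  · obtain ⟨v, u, hv, hu, hpos, hneg⟩ := H.hasWitness hz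
    have hva := H.eq_of_lf hv ha
    have hub := H.eq_of_lf hu hb
    rw [canonIdn, heq, H.inl_eqClass_mem_designated hz, Sum.inl.injEq]
    cases hzpol : z.1
    · refine ⟨nofun, fun hab => ?_⟩
      have hvu : Node.eq v u ∈ l :=
        H.eq_trans hva (H.eq_trans (H.eq_of_eqClass_eq hb hab) (H.eq_symm hub))
      exact ((hneg hzpol).elim (· (H.polarity_eq hvu)) (H.not_eq_and_neq hvu)).elim
    · simp only [true_iff]
      rw [← H.eqClass_eq hva, ← H.eqClass_eq hub, H.eqClass_eq (hpos hzpol)]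
  · simp [canonIdn, heq]

theorem isSCIModel : IsSCIModel (canonModel l) :=
  ⟨⟨.inr false⟩, Set.ne_univ_iff_exists_notMem _ |>.2 ⟨.inr false, by simp [canonModel]⟩,
    H.canonNeg_mem_designated, H.canonImp_mem_designated, H.canonIdn_mem_designated⟩

theorem canonVal_of_lf {φ : SCIForm} : ∀ {w : Label}, Node.lf w φ ∈ l →
    canonVal l φ = .inl (eqClass l w) := by
  induction φ with
  | atom n =>
    intro w hw
    have hex : ∃ w', Node.lf w' (.atom n) ∈ l := ⟨w, hw⟩
    rw [canonVal, dif_pos hex, H.eqClass_eq (H.eq_of_lf hex.choose_spec hw)]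
  | not φ ih =>
    intro w hw
    obtain ⟨v, hv, -⟩ := H.hasWitness hw
    rw [canonVal, ih hv]
    exact H.canonNeg_eqClass hv hw
  | imp φ ψ ihφ ihψ =>
    intro w hw
    obtain ⟨v, u, hv, hu, -⟩ := H.hasWitness hw
    rw [canonVal, ihφ hv, ihψ hu]
    exact H.canonBin_eqClass H.eq_imp _ hv hu hw
  | idn φ ψ ihφ ihψ =>
    intro w hw
    obtain ⟨v, u, hv, hu, -⟩ := H.hasWitness hw
    rw [canonVal, ihφ hv, ihψ hu]
    exact H.canonBin_eqClass H.eq_idn _ hv hu hw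

theorem not_valid {w : Label} {φ : SCIForm} (hw : Node.lf w φ ∈ l) (hneg : negL w) :
    ¬SCIValid φ := fun hval => by
  have hdes := hval _ _ _ H.isSCIModel (isValuation_canonVal l)
  rw [H.canonVal_of_lf hw] at hdes
  simp [(H.inl_eqClass_mem_designated hw).1 hdes, negL] at hneg

end IsHintikka

def Witnessed (l : List Node) (E : Set (Label × SCIForm)) : Prop :=
  ∀ p ∈ E, HasWitness l p.1 p.2

theorem Extend.subset {l l' : List Node} {E E' : Set (Label × SCIForm)} (h : Extend l E l' E') :
    l ⊆ l' := by
  cases h <;> exact List.subset_append_left _ _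

theorem Extend.witnessed {l l' : List Node} {E E' : Set (Label × SCIForm)}
    (h : Extend l E l' E') (hw : Witnessed l E) : Witnessed l' E' := by
  have hmono : ∀ p ∈ E, HasWitness l' p.1 p.2 := fun p hp => (hw p hp).mono h.subset
  cases h
  all_goals first
    | exact hmono
    | rintro p (rfl | hp)
      -- the newly decomposed formula is witnessed by the nodes the rule appends
      · clear hmono hw
        first
          | exact ⟨_, List.mem_append_right _ List.mem_cons_self, by simp_all [posL, negL]⟩
          | exact ⟨_, _, List.mem_append_right _ List.mem_cons_self,
              List.mem_append_right _ (List.mem_cons_of_mem _ List.mem_cons_self),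
              by simp_all [posL, negL]⟩
      · exact hmono p hp

theorem exists_fresh (l : List Node) : ∃ k, ∀ (b : Bool) (j : ℕ), k ≤ j → freshL (b, j) l := by
  induction l with
  | nil => exact ⟨0, fun _ _ _ _ => List.not_mem_nil⟩
  | cons x l ih =>
    obtain ⟨k, hk⟩ := ih
    refine ⟨max k (match x with | .lf w _ => w.2 + 1 | _ => 0), fun b j hj φ hmem => ?_⟩
    rcases List.mem_cons.1 hmem with rfl | hmem
    · simp at hj
    · exact hk b j (le_of_max_le_left hj) φ hmem

theorem isHintikka_of_terminal {l : List Node} {E : Set (Label × SCIForm)} (hbot : Node.bot ∉ l)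
    (hterm : ∀ l' E', ¬Extend l E l' E') (hw : Witnessed l E) : IsHintikka l where
  not_eq_and_neq _ _ he hn := hterm _ _ (.bot1 l E _ _ hbot he hn)
  not_eq_pos_neg _ _ hp hn he := hterm _ _ (.bot2 l E _ _ hbot hp hn he)
  eq_symm _ _ he := by_contra fun hn => hterm _ _ (.ruleSym l E _ _ hbot he hn)
  eq_trans _ _ _ he₁ he₂ := by_contra fun hn => hterm _ _ (.ruleTran l E _ _ _ hbot he₁ he₂ hn)
  eq_of_lf _ _ _ h₁ h₂ := by_contra fun hn => hterm _ _ (.ruleF l E _ _ _ hbot h₁ h₂ hn)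
  eq_not _ _ _ _ _ _ h₁ h₂ h₃ h₄ h₅ := by_contra fun hn =>
    hterm _ _ (.eqNeg l E _ _ _ _ _ _ hbot h₁ h₂ h₃ h₄ h₅ hn)
  eq_imp _ _ _ _ _ _ _ _ _ _ h₁ h₂ h₃ h₄ h₅ h₆ h₇ h₈ := by_contra fun hn =>
    hterm _ _ (.eqImp l E _ _ _ _ _ _ _ _ _ _ hbot h₁ h₂ h₃ h₄ h₅ h₆ h₇ h₈ hn)
  eq_idn _ _ _ _ _ _ _ _ _ _ h₁ h₂ h₃ h₄ h₅ h₆ h₇ h₈ := by_contra fun hn =>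
    hterm _ _ (.eqIdn l E _ _ _ _ _ _ _ _ _ _ hbot h₁ h₂ h₃ h₄ h₅ h₆ h₇ h₈ hn)
  hasWitness w φ hmem := by
    by_cases hE : (w, φ) ∈ E
    · exact hw _ hE
    obtain ⟨k, hk⟩ := exists_fresh l
    have hne : ∀ b c : Bool, ((b, k) : Label) ≠ (c, k + 1) := by simp
    have hv := fun b => hk b k le_rfl
    have hu := fun b => hk b (k + 1) (Nat.le_succ k)
    cases φ with
    | atom => trivial
    | not φ =>
      exfalso
      cases hpol : w.1
      · exact hterm _ _ (.negN l E w (true, k) φ hbot hpol hmem hE rfl (hv true))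
      · exact hterm _ _ (.negP l E w (false, k) φ hbot hpol hmem hE rfl (hv false))
    | imp φ ψ =>
      exfalso
      cases hpol : w.1
      · exact hterm _ _ (.impN l E w (true, k) (false, k + 1) φ ψ hbot hpol hmem hE rfl rfl
          (hne _ _) (hv _) (hu _))
      · exact hterm _ _ (.impP1 l E w (false, k) (false, k + 1) φ ψ hbot hpol hmem hE rfl rfl
          (hne _ _) (hv _) (hu _))
    | idn φ ψ =>
      exfalso
      cases hpol : w.1
      · exact hterm _ _ (.idnN1 l E w (true, k) (true, k + 1) φ ψ hbot hpol hmem hE rfl rfl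
          (hne _ _) (hv _) (hu _))
      · exact hterm _ _ (.idnP1 l E w (true, k) (true, k + 1) φ ψ hbot hpol hmem hE rfl rfl
          (hne _ _) (hv _) (hu _))

def ExtendStep (p q : List Node × Set (Label × SCIForm)) : Prop := Extend p.1 p.2 q.1 q.2

theorem not_valid_of_terminal {w : Label} {φ : SCIForm} {l : List Node}
    {E : Set (Label × SCIForm)} (hneg : negL w)
    (hreach : ReflTransGen ExtendStep ([Node.lf w φ], ∅) (l, E)) (hbot : Node.bot ∉ l)
    (hterm : ∀ l' E', ¬Extend l E l' E') : ¬SCIValid φ := by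
  have hinv : ∀ q, ReflTransGen ExtendStep ([Node.lf w φ], ∅) q →
      Node.lf w φ ∈ q.1 ∧ Witnessed q.1 q.2 := by
    intro q hq
    induction hq with
    | refl => exact ⟨List.mem_singleton_self _, fun _ => False.elim⟩
    | tail _ hstep ih => exact ⟨hstep.subset ih.1, hstep.witnessed ih.2⟩
  obtain ⟨hroot, hw⟩ := hinv _ hreach
  exact (isHintikka_of_terminal hbot hterm hw).not_valid hroot hneg

def Node.labelledFormula : Node → Option (Label × SCIForm)
  | .lf w φ => some (w, φ)
  | _ => none

def labelledFormulas (l : List Node) : Finset (Label × SCIForm) :=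
  (l.filterMap Node.labelledFormula).toFinset

theorem mem_labelledFormulas {l : List Node} {p : Label × SCIForm} :
    p ∈ labelledFormulas l ↔ Node.lf p.1 p.2 ∈ l := by
  constructor
  · simp only [labelledFormulas, List.mem_toFinset, List.mem_filterMap]
    rintro ⟨(_ | _ | _ | _), hn, ⟨⟩⟩
    exact hn
  · exact fun h => List.mem_toFinset.2 (List.mem_filterMap.2 ⟨_, h, rfl⟩)

noncomputable def pending (l : List Node) (E : Set (Label × SCIForm)) :
    Finset (Label × SCIForm) :=
  {p ∈ labelledFormulas l | p ∉ E}

/-- Weighting a pending formula by `3 ^ size` makes every decomposition step decrease the total,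
since `3 ^ a + 3 ^ b < 3 ^ (a + b + 1)`. -/
noncomputable def pendingWeight (l : List Node) (E : Set (Label × SCIForm)) : ℕ :=
  ∑ p ∈ pending l E, 3 ^ p.2.size

theorem pendingWeight_append_lt {l t : List Node} {E : Set (Label × SCIForm)} {w : Label}
    {χ : SCIForm} (hmem : Node.lf w χ ∈ l) (hE : (w, χ) ∉ E)
    (ht : ∑ q ∈ labelledFormulas t, 3 ^ q.2.size < 3 ^ χ.size) :
    pendingWeight (l ++ t) (insert (w, χ) E) < pendingWeight l E := by
  have hsub : pending (l ++ t) (insert (w, χ) E) ⊆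
      (pending l E).erase (w, χ) ∪ labelledFormulas t := by
    intro p
    simp only [pending, Finset.mem_filter, mem_labelledFormulas, List.mem_append,
      Set.mem_insert_iff, Finset.mem_union, Finset.mem_erase]
    tauto
  have hp : (w, χ) ∈ pending l E := Finset.mem_filter.2 ⟨mem_labelledFormulas.2 hmem, hE⟩
  calc pendingWeight (l ++ t) (insert (w, χ) E)
      ≤ ∑ p ∈ (pending l E).erase (w, χ) ∪ labelledFormulas t, 3 ^ p.2.size :=
        Finset.sum_le_sum_of_subset hsub
    _ ≤ ∑ p ∈ (pending l E).erase (w, χ), 3 ^ p.2.size +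
          ∑ q ∈ labelledFormulas t, 3 ^ q.2.size := by
        rw [← Finset.sum_union_inter]; exact Nat.le_add_right _ _
    _ < ∑ p ∈ (pending l E).erase (w, χ), 3 ^ p.2.size + 3 ^ χ.size := by gcongr
    _ = pendingWeight l E := Finset.sum_erase_add _ _ hp

theorem pendingWeight_append_eq (l : List Node) (E : Set (Label × SCIForm)) (x y : Label) :
    pendingWeight (l ++ [Node.eq x y]) E = pendingWeight l E := by
  simp [pendingWeight, pending, labelledFormulas, Node.labelledFormula, List.filterMap_cons]

def Node.labels : Node → Finset Label
  | .lf w _ => {w}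
  | .eq w v => {w, v}
  | .neq w v => {w, v}
  | .bot => ∅

def labels (l : List Node) : Finset Label := l.toFinset.biUnion Node.labels

theorem mem_labels_of_lf {l : List Node} {w : Label} {φ : SCIForm} (h : Node.lf w φ ∈ l) :
    w ∈ labels l :=
  Finset.mem_biUnion.2 ⟨_, List.mem_toFinset.2 h, by simp [Node.labels]⟩

theorem mem_labels_of_eq_left {l : List Node} {w v : Label} (h : Node.eq w v ∈ l) :
    w ∈ labels l :=
  Finset.mem_biUnion.2 ⟨_, List.mem_toFinset.2 h, by simp [Node.labels]⟩

theorem mem_labels_of_eq_right {l : List Node} {w v : Label} (h : Node.eq w v ∈ l) :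
    v ∈ labels l :=
  Finset.mem_biUnion.2 ⟨_, List.mem_toFinset.2 h, by simp [Node.labels]⟩

noncomputable def missingEqualities (l : List Node) : ℕ :=
  ({q ∈ labels l ×ˢ labels l | Node.eq q.1 q.2 ∉ l} : Finset (Label × Label)).card

theorem missingEqualities_append_lt {l : List Node} {x y : Label} (hx : x ∈ labels l)
    (hy : y ∈ labels l) (hnew : Node.eq x y ∉ l) :
    missingEqualities (l ++ [Node.eq x y]) < missingEqualities l := by
  have hlabels : labels (l ++ [Node.eq x y]) = labels l := by
    ext z
    simp only [labels, Finset.mem_biUnion, List.mem_toFinset, List.mem_append,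
      List.mem_singleton] at hx hy ⊢
    refine ⟨?_, fun ⟨n, hn, hz⟩ => ⟨n, .inl hn, hz⟩⟩
    rintro ⟨n, hn | rfl, hz⟩
    · exact ⟨n, hn, hz⟩
    · simp only [Node.labels, Finset.mem_insert, Finset.mem_singleton] at hz
      rcases hz with rfl | rfl
      exacts [hx, hy]
  unfold missingEqualities
  refine Finset.card_lt_card ⟨fun q => ?_, fun hsub => ?_⟩
  · simp only [hlabels, Finset.mem_filter, List.mem_append]; tauto
  · have := hsub (x := (x, y)) (Finset.mem_filter.2 ⟨Finset.mem_product.2 ⟨hx, hy⟩, hnew⟩)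
    simp [hlabels] at this

theorem three_pow_add_lt (a b : ℕ) : 3 ^ a + 3 ^ b < 3 ^ (a + b + 1) := by
  have ha : 3 ^ a ≤ 3 ^ (a + b) := Nat.pow_le_pow_right (by norm_num) (Nat.le_add_right a b)
  have hb : 3 ^ b ≤ 3 ^ (a + b) := Nat.pow_le_pow_right (by norm_num) (Nat.le_add_left b a)
  have hpos : 0 < 3 ^ (a + b) := by positivity
  rw [pow_succ]
  omega

theorem sum_pair_lt {v u : Label} (hvu : v ≠ u) (φ ψ : SCIForm) :
    ∑ q ∈ ({(v, φ), (u, ψ)} : Finset (Label × SCIForm)), 3 ^ q.2.size <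
      3 ^ (φ.size + ψ.size + 1) := by
  rw [Finset.sum_pair fun h => hvu (congrArg Prod.fst h)]
  exact three_pow_add_lt _ _

theorem Extend.lex_lt {l l' : List Node} {E E' : Set (Label × SCIForm)} (h : Extend l E l' E')
    (hbot : Node.bot ∉ l') :
    Prod.Lex (· < ·) (· < ·) (pendingWeight l' E', missingEqualities l')
      (pendingWeight l E, missingEqualities l) := by
  cases h
  case bot1 | bot2 => simp at hbot
  case negP | negN | impP1 | impP2 | impP3 | impN | idnP1 | idnP2 | idnN1 | idnN2 | idnN3 | idnN4 =>
    refine .left _ _ (pendingWeight_append_lt ?_ ?_ ?_)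
    · assumption
    · assumption
    · first
        | simpa [labelledFormulas, Node.labelledFormula, SCIForm.size]
            using Nat.pow_lt_pow_succ (by norm_num : 1 < 3)
        | simpa [labelledFormulas, Node.labelledFormula, List.filterMap_cons, SCIForm.size]
            using sum_pair_lt ‹_ ≠ _› _ _
  case eqNeg | eqImp | eqIdn | ruleF | ruleSym | ruleTran =>
    rw [pendingWeight_append_eq]
    refine .right _ (missingEqualities_append_lt ?_ ?_ ‹_›) <;>
        solve_by_elim [mem_labels_of_lf, mem_labels_of_eq_left, mem_labels_of_eq_right]

theorem Extend.bot_notMem_of_not_closedTab {l l' : List Node} {E E' : Set (Label × SCIForm)}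
    (h : Extend l E l' E') (hopen : ¬ClosedTab l' E') : Node.bot ∉ l' := by
  cases h
  case bot1 w v _ he hn =>
    exact absurd (.clos1 _ _ w v (List.mem_append_left _ he) (List.mem_append_left _ hn)) hopen
  case bot2 w v _ hw hv he => exact absurd (.clos2 _ _ w v hw hv (List.mem_append_left _ he)) hopen
  all_goals simpa

/-- Built with the common fresh labels `(b, k)` and `(c, k + 1)`, every branch of a branching rule
is a one-step extension. -/
theorem Extend.closedTab_of_forall {l l₁ : List Node} {E E₁ : Set (Label × SCIForm)}
    (h : Extend l E l₁ E₁) (hall : ∀ l' E', Extend l E l' E' → ClosedTab l' E') :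
    ClosedTab l E := by
  obtain ⟨k, hk⟩ := exists_fresh l
  have hv := fun b => hk b k le_rfl
  have hu := fun b => hk b (k + 1) (Nat.le_succ k)
  have hne : ∀ b c : Bool, ((b, k) : Label) ≠ (c, k + 1) := by simp
  cases h with
  | negP w v φ hbot hw hmem hE hv' hfresh =>
    exact .negP l E w v φ hw hmem hE hv' hfresh
      (hall _ _ (.negP l E w v φ hbot hw hmem hE hv' hfresh))
  | negN w v φ hbot hw hmem hE hv' hfresh =>
    exact .negN l E w v φ hw hmem hE hv' hfresh
      (hall _ _ (.negN l E w v φ hbot hw hmem hE hv' hfresh))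
  | impP1 w _ _ φ ψ hbot hw hmem hE | impP2 w _ _ φ ψ hbot hw hmem hE
  | impP3 w _ _ φ ψ hbot hw hmem hE =>
    exact .impP l E w φ ψ (false, k) (false, k + 1) (false, k) (true, k + 1) (true, k) (true, k + 1)
      hw hmem hE rfl rfl (hne _ _) (hv _) (hu _) rfl rfl (hne _ _) (hv _) (hu _)
      rfl rfl (hne _ _) (hv _) (hu _)
      (hall _ _ (.impP1 l E w _ _ φ ψ hbot hw hmem hE rfl rfl (hne _ _) (hv _) (hu _)))
      (hall _ _ (.impP2 l E w _ _ φ ψ hbot hw hmem hE rfl rfl (hne _ _) (hv _) (hu _)))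
      (hall _ _ (.impP3 l E w _ _ φ ψ hbot hw hmem hE rfl rfl (hne _ _) (hv _) (hu _)))
  | impN w v u φ ψ hbot hw hmem hE hv' hu' hvu hfv hfu =>
    exact .impN l E w v u φ ψ hw hmem hE hv' hu' hvu hfv hfu
      (hall _ _ (.impN l E w v u φ ψ hbot hw hmem hE hv' hu' hvu hfv hfu))
  | idnP1 w _ _ φ ψ hbot hw hmem hE | idnP2 w _ _ φ ψ hbot hw hmem hE =>
    exact .idnP l E w φ ψ (true, k) (true, k + 1) (false, k) (false, k + 1)
      hw hmem hE rfl rfl (hne _ _) (hv _) (hu _) rfl rfl (hne _ _) (hv _) (hu _)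
      (hall _ _ (.idnP1 l E w _ _ φ ψ hbot hw hmem hE rfl rfl (hne _ _) (hv _) (hu _)))
      (hall _ _ (.idnP2 l E w _ _ φ ψ hbot hw hmem hE rfl rfl (hne _ _) (hv _) (hu _)))
  | idnN1 w _ _ φ ψ hbot hw hmem hE | idnN2 w _ _ φ ψ hbot hw hmem hE
  | idnN3 w _ _ φ ψ hbot hw hmem hE | idnN4 w _ _ φ ψ hbot hw hmem hE =>
    exact .idnN l E w φ ψ (true, k) (true, k + 1) (true, k) (false, k + 1) (false, k) (true, k + 1)
      (false, k) (false, k + 1) hw hmem hE rfl rfl (hne _ _) (hv _) (hu _)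
      rfl rfl (hne _ _) (hv _) (hu _) rfl rfl (hne _ _) (hv _) (hu _)
      rfl rfl (hne _ _) (hv _) (hu _)
      (hall _ _ (.idnN1 l E w _ _ φ ψ hbot hw hmem hE rfl rfl (hne _ _) (hv _) (hu _)))
      (hall _ _ (.idnN2 l E w _ _ φ ψ hbot hw hmem hE rfl rfl (hne _ _) (hv _) (hu _)))
      (hall _ _ (.idnN3 l E w _ _ φ ψ hbot hw hmem hE rfl rfl (hne _ _) (hv _) (hu _)))
      (hall _ _ (.idnN4 l E w _ _ φ ψ hbot hw hmem hE rfl rfl (hne _ _) (hv _) (hu _)))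
  | eqNeg w v u y φ ψ hbot h₁ h₂ h₃ h₄ h₅ hn =>
    exact .eqNeg l E w v u y φ ψ h₁ h₂ h₃ h₄ h₅ hn
      (hall _ _ (.eqNeg l E w v u y φ ψ hbot h₁ h₂ h₃ h₄ h₅ hn))
  | eqImp w v w' v' x z φ ψ χ θ hbot h₁ h₂ h₃ h₄ h₅ h₆ h₇ h₈ hn =>
    exact .eqImp l E w v w' v' x z φ ψ χ θ h₁ h₂ h₃ h₄ h₅ h₆ h₇ h₈ hn
      (hall _ _ (.eqImp l E w v w' v' x z φ ψ χ θ hbot h₁ h₂ h₃ h₄ h₅ h₆ h₇ h₈ hn))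
  | eqIdn w v w' v' x z φ ψ χ θ hbot h₁ h₂ h₃ h₄ h₅ h₆ h₇ h₈ hn =>
    exact .eqIdn l E w v w' v' x z φ ψ χ θ h₁ h₂ h₃ h₄ h₅ h₆ h₇ h₈ hn
      (hall _ _ (.eqIdn l E w v w' v' x z φ ψ χ θ hbot h₁ h₂ h₃ h₄ h₅ h₆ h₇ h₈ hn))
  | ruleF w v φ hbot h₁ h₂ hn =>
    exact .ruleF l E w v φ h₁ h₂ hn (hall _ _ (.ruleF l E w v φ hbot h₁ h₂ hn))
  | ruleSym w v hbot he hn =>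
    exact .ruleSym l E w v he hn (hall _ _ (.ruleSym l E w v hbot he hn))
  | ruleTran w v u hbot h₁ h₂ hn =>
    exact .ruleTran l E w v u h₁ h₂ hn (hall _ _ (.ruleTran l E w v u hbot h₁ h₂ hn))
  | bot1 w v _ he hn => exact .clos1 l E w v he hn
  | bot2 w v _ hw hv' he => exact .clos2 l E w v hw hv' he

theorem exists_terminal_of_not_closedTab {l : List Node} {E : Set (Label × SCIForm)}
    (hbot : Node.bot ∉ l) (hopen : ¬ClosedTab l E) :
    ∃ l' E', ReflTransGen ExtendStep (l, E) (l', E') ∧ Node.bot ∉ l' ∧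
      ∀ l'' E'', ¬Extend l' E' l'' E'' := by
  by_cases hterm : ∀ l₁ E₁, ¬Extend l E l₁ E₁
  · exact ⟨l, E, .refl, hbot, hterm⟩
  obtain ⟨l₁, E₁, h₁⟩ : ∃ l₁ E₁, Extend l E l₁ E₁ := by simpa using hterm
  obtain ⟨l₂, E₂, h₂, hopen₂⟩ : ∃ l₂ E₂, Extend l E l₂ E₂ ∧ ¬ClosedTab l₂ E₂ := by
    by_contra! hall
    exact hopen (h₁.closedTab_of_forall hall)
  have hbot₂ := h₂.bot_notMem_of_not_closedTab hopen₂
  have hlt := h₂.lex_lt hbot₂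
  obtain ⟨l', E', hreach, hrest⟩ := exists_terminal_of_not_closedTab hbot₂ hopen₂
  exact ⟨l', E', .head (show ExtendStep (l, E) (l₂, E₂) from h₂) hreach, hrest⟩
termination_by (pendingWeight l E, missingEqualities l)
decreasing_by exact hlt

/-- completeness of TC_SCI.  If an SCI-formula φ is SCI-valid,
then φ has a tableau proof, i.e., there is a closed TC_SCI-tableau with
w⁻ : φ (w⁻ ∈ L⁻) at its root; equivalently, every fully expanded TC_SCI-tableau
with w⁻ : φ at its root is closed (every fully expanded branch developed from
the root w⁻ : φ carries ⊥). -/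
theorem stmt_13 (φ : SCIForm) (hval : SCIValid φ) :
    (∀ w : Label, negL w → ClosedTab [Node.lf w φ] ∅) ∧
    (∀ w : Label, negL w →
      ∀ (n : ℕ) (g : ℕ → List Node) (h : ℕ → Set (Label × SCIForm)),
        g 0 = [Node.lf w φ] → h 0 = ∅ →
        (∀ i < n, Extend (g i) (h i) (g (i + 1)) (h (i + 1))) →
        (∀ l' E', ¬ Extend (g n) (h n) l' E') →
        Node.bot ∈ g n) := by
  refine ⟨fun w hw => ?_, fun w hw n g h hg0 hh0 hstep hterm => ?_⟩
  · by_contra hopen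
    obtain ⟨l, E, hreach, hbot, hterm⟩ := exists_terminal_of_not_closedTab (by simp) hopen
    exact not_valid_of_terminal hw hreach hbot hterm hval
  · by_contra hbot
    have hreach : ReflTransGen ExtendStep (g 0, h 0) (g n, h n) :=
      (reflTransGen_of_succ_of_le (fun i j => ExtendStep (g i, h i) (g j, h j))
        (fun i hi => hstep i hi.2) (Nat.zero_le n)).lift _ fun _ _ => id
    rw [hg0, hh0] at hreach
    exact not_valid_of_terminal hw hreach hbot hterm hval
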